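/- (Theorem 1) If det A(λ) ≠ 0, then the loaded Volterra integral equation has exactly one continuous solution x : [t₀,T] → ℝ. -/

import Mathlib

/-!
Extend `K` continuously from the triangle to the plane (Tietze) and let `V` be the Volterra
operator `(V x)(t) = λ ∫_{t₀}^t K(t,s) x(s) ds` on `C([t₀,T])`. If `|K| ≤ M`, then
`‖Vⁿ‖ ≤ (|λ| M (T - t₀))ⁿ / n!`, so the Neumann series `∑ Vⁿ` converges and `1 - V` is invertible
with inverse `∑ Vⁿ`. By Fubini on the triangle, `Vⁿ⁺¹` is the integral operator with kernel
`λⁿ⁺¹ Kₙ₊₁`, hence `(1 - V)⁻¹ y = y + ∫ R y` and `b_j = (1 - V)⁻¹ a_j`.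
The loaded equation reads `(1 - V) x + ∑ x(t_j) a_j = f`, i.e. `x = (1 - V)⁻¹ f - ∑ x(t_j) b_j`;
evaluating at the load points, `c = (x(t_j))_j` must solve `A(λ) c = ((1 - V)⁻¹ f)(t_i)`, which
has exactly one solution when `det A(λ) ≠ 0`.
-/

open MeasureTheory Matrix
open intervalIntegral Set
open scoped Nat

universe u v

theorem ContinuousOn.exists_continuous_eqOn {X : Type u} {Y : Type v} [TopologicalSpace X]
    [NormalSpace X] [TopologicalSpace Y] [TietzeExtension.{u, v} Y] {s : Set X} (hs : IsClosed s)
    {f : X → Y} (hf : ContinuousOn f s) : ∃ g : X → Y, Continuous g ∧ EqOn g f s := by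
  obtain ⟨g, hg⟩ := ContinuousMap.exists_restrict_eq hs ⟨s.domRestrict f, hf.domRestrict⟩
  exact ⟨g, g.continuous, fun x hx => congr($hg ⟨x, hx⟩)⟩

theorem integral_sub_pow_div_factorial (a t : ℝ) (n : ℕ) :
    ∫ s in a..t, (s - a) ^ n / n ! = (t - a) ^ (n + 1) / (n + 1)! := by
  rw [intervalIntegral.integral_div, intervalIntegral.integral_comp_sub_right (· ^ n),
    integral_pow, Nat.factorial_succ]
  push_cast
  field_simp
  ring

theorem abs_integral_mul_le_pow_div_factorial {a t M c : ℝ} {k g : ℝ → ℝ} (n : ℕ)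
    (hat : a ≤ t) (hk : ∀ s ∈ Ioc a t, |k s| ≤ M)
    (hg : ∀ s ∈ Ioc a t, |g s| ≤ c * ((s - a) ^ n / n !)) :
    |∫ s in a..t, k s * g s| ≤ M * c * ((t - a) ^ (n + 1) / (n + 1)!) := by
  have hbound : ∀ s ∈ Ioc a t, ‖k s * g s‖ ≤ M * c * ((s - a) ^ n / n !) := fun s hs => by
    rw [Real.norm_eq_abs, abs_mul, mul_assoc]
    exact mul_le_mul (hk s hs) (hg s hs) (abs_nonneg _) ((abs_nonneg _).trans (hk s hs))
  calc |∫ s in a..t, k s * g s|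
      ≤ ∫ s in a..t, M * c * ((s - a) ^ n / n !) :=
        norm_integral_le_of_norm_le hat (ae_of_all _ hbound)
          (Continuous.intervalIntegrable (by fun_prop) _ _)
    _ = M * c * ((t - a) ^ (n + 1) / (n + 1)!) := by
        rw [intervalIntegral.integral_const_mul, integral_sub_pow_div_factorial]

theorem integral_integral_swap_triangle {a t : ℝ} (hat : a ≤ t) {H : ℝ → ℝ → ℝ}
    (hH : Continuous (Function.uncurry H)) :
    ∫ s in a..t, ∫ z in a..s, H s z = ∫ z in a..t, ∫ s in z..t, H s z := by
  set μ := volume.restrict (Ioc a t)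
  set G : ℝ → ℝ → ℝ := fun s z => (Iic s).indicator (H s) z
  have hG : Integrable (Function.uncurry G) (μ.prod μ) := by
    have hH' : IntegrableOn (Function.uncurry H) (Icc a t ×ˢ Icc a t) :=
      hH.continuousOn.integrableOn_compact (isCompact_Icc.prod isCompact_Icc)
    have : Function.uncurry G = {q : ℝ × ℝ | q.2 ≤ q.1}.indicator (Function.uncurry H) := by
      ext q; simp [G, indicator, Function.uncurry]
    rw [this, Measure.prod_restrict, ← Measure.volume_eq_prod]
    exact (hH'.mono_set (prod_mono Ioc_subset_Icc_self Ioc_subset_Icc_self)).indicator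
      (measurableSet_le measurable_snd measurable_fst)
  have hinner : ∀ s ∈ Ioc a t, ∫ z, G s z ∂μ = ∫ z in a..s, H s z := fun s hs => by
    rw [MeasureTheory.integral_indicator measurableSet_Iic,
      Measure.restrict_restrict measurableSet_Iic, inter_comm, Ioc_inter_Iic, inf_eq_right.2 hs.2,
      integral_of_le hs.1.le]
  have houter : ∀ z ∈ Ioc a t, ∫ s, G s z ∂μ = ∫ s in z..t, H s z := fun z hz => by
    have : (fun s => G s z) = (Ici z).indicator (fun s => H s z) := by
      ext s; simp [G, indicator]
    rw [this, MeasureTheory.integral_indicator measurableSet_Ici,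
      Measure.restrict_restrict measurableSet_Ici, integral_of_le hz.2,
      ← integral_Icc_eq_integral_Ioc]
    congr 2
    ext s
    simp only [mem_inter_iff, mem_Ici, mem_Ioc, mem_Icc]
    constructor
    · rintro ⟨hzs, -, hst⟩; exact ⟨hzs, hst⟩
    · rintro ⟨hzs, hst⟩; exact ⟨hzs, hz.1.trans_le hzs, hst⟩
  calc ∫ s in a..t, ∫ z in a..s, H s z
      = ∫ s, ∫ z, G s z ∂μ ∂μ := by
        rw [integral_of_le hat]
        exact setIntegral_congr_fun measurableSet_Ioc fun s hs => (hinner s hs).symm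
    _ = ∫ z, ∫ s, G s z ∂μ ∂μ := integral_integral_swap hG
    _ = ∫ z in a..t, ∫ s in z..t, H s z := by
        rw [integral_of_le hat]
        exact setIntegral_congr_fun measurableSet_Ioc houter

/-- `iteratedKernel K n` is the iterated kernel `K_{n+1}` (shifted so that no index is junk). -/
noncomputable def iteratedKernel (K : ℝ → ℝ → ℝ) : ℕ → ℝ → ℝ → ℝ
  | 0 => K
  | n + 1 => fun t s => ∫ z in s..t, K t z * iteratedKernel K n z s

section IteratedKernel

variable {K : ℝ → ℝ → ℝ}

theorem iteratedKernel_zero : iteratedKernel K 0 = K := rfl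

theorem iteratedKernel_succ (n : ℕ) (t s : ℝ) :
    iteratedKernel K (n + 1) t s = ∫ z in s..t, K t z * iteratedKernel K n z s := rfl

theorem continuous_iteratedKernel (hK : Continuous (Function.uncurry K)) (n : ℕ) :
    Continuous (Function.uncurry (iteratedKernel K n)) := by
  induction n with
  | zero => exact hK
  | succ n ih =>
    have hF : Continuous fun p : (ℝ × ℝ) × ℝ => K p.1.1 p.2 * iteratedKernel K n p.2 p.1.2 :=
      (hK.comp (continuous_fst.fst.prodMk continuous_snd)).mul
        (ih.comp (continuous_snd.prodMk continuous_fst.snd))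
    have hint : ∀ q : ℝ × ℝ, ∀ c d : ℝ,
        IntervalIntegrable (fun z => K q.1 z * iteratedKernel K n z q.2) volume c d :=
      fun q c d => (hF.comp (Continuous.prodMk_right q)).intervalIntegrable c d
    have hsplit : Function.uncurry (iteratedKernel K (n + 1)) = fun q : ℝ × ℝ =>
        (∫ z in (0 : ℝ)..q.1, K q.1 z * iteratedKernel K n z q.2) -
          ∫ z in (0 : ℝ)..q.2, K q.1 z * iteratedKernel K n z q.2 := by
      ext q
      exact (integral_interval_sub_left (hint q 0 q.1) (hint q 0 q.2)).symm
    rw [hsplit]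
    exact (continuous_parametric_intervalIntegral_of_continuous hF continuous_fst).sub
      (continuous_parametric_intervalIntegral_of_continuous hF continuous_snd)

theorem abs_iteratedKernel_le {a b M : ℝ} (hM : ∀ t ∈ Icc a b, ∀ s ∈ Icc a b, |K t s| ≤ M)
    (n : ℕ) {t s : ℝ} (has : a ≤ s) (hst : s ≤ t) (htb : t ≤ b) :
    |iteratedKernel K n t s| ≤ M ^ (n + 1) * ((t - s) ^ n / n !) := by
  induction n generalizing t with
  | zero => simpa [iteratedKernel_zero] using hM t ⟨has.trans hst, htb⟩ s ⟨has, hst.trans htb⟩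
  | succ n ih =>
    rw [iteratedKernel_succ, pow_succ' M]
    exact abs_integral_mul_le_pow_div_factorial n hst
      (fun z hz => hM t ⟨has.trans hst, htb⟩ z ⟨has.trans hz.1.le, hz.2.trans htb⟩)
      (fun z hz => ih hz.1.le (hz.2.trans htb))

theorem abs_iteratedKernel_le_uniform {a b M : ℝ}
    (hM : ∀ t ∈ Icc a b, ∀ s ∈ Icc a b, |K t s| ≤ M) (n : ℕ) {t s : ℝ} (has : a ≤ s)
    (hst : s ≤ t) (htb : t ≤ b) : |iteratedKernel K n t s| ≤ M * ((M * (b - a)) ^ n / n !) := by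
  have hM0 : 0 ≤ M := (abs_nonneg _).trans (hM s ⟨has, hst.trans htb⟩ s ⟨has, hst.trans htb⟩)
  refine (abs_iteratedKernel_le hM n has hst htb).trans ?_
  rw [pow_succ', mul_pow, mul_assoc, mul_div_assoc]
  gcongr

end IteratedKernel

noncomputable def ContinuousLinearEquiv.oneSubOfSummable {𝕜 E : Type*}
    [NontriviallyNormedField 𝕜] [NormedAddCommGroup E] [NormedSpace 𝕜 E] (V : E →L[𝕜] E)
    (h : Summable (V ^ ·)) : E ≃L[𝕜] E :=
  unitsEquiv 𝕜 E ⟨1 - V, ∑' n, V ^ n, h.one_sub_mul_tsum_pow, h.tsum_pow_mul_one_sub⟩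

theorem ContinuousLinearEquiv.oneSubOfSummable_apply {𝕜 E : Type*} [NontriviallyNormedField 𝕜]
    [NormedAddCommGroup E] [NormedSpace 𝕜 E] (V : E →L[𝕜] E) (h : Summable (V ^ ·)) (x : E) :
    oneSubOfSummable V h x = x - V x :=
  rfl

section Volterra

variable {a b : ℝ} (hab : a ≤ b) {K : ℝ → ℝ → ℝ} (hK : Continuous (Function.uncurry K))
include hK

theorem continuous_integral_kernel_mul {x : ℝ → ℝ} (hx : Continuous x) :
    Continuous fun t => ∫ s in a..t, K t s * x s :=
  continuous_parametric_intervalIntegral_of_continuous (hK.mul (hx.comp continuous_snd))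
    continuous_id

theorem intervalIntegrable_kernel_mul {x : ℝ → ℝ} (hx : Continuous x) (t c d : ℝ) :
    IntervalIntegrable (fun s => K t s * x s) volume c d :=
  ((hK.comp (Continuous.prodMk_right t)).mul hx).intervalIntegrable c d

theorem exists_abs_kernel_le : ∃ M, ∀ t ∈ Icc a b, ∀ s ∈ Icc a b, |K t s| ≤ M := by
  obtain ⟨M, hM⟩ := (isCompact_Icc.prod isCompact_Icc).exists_bound_of_continuousOn
    hK.continuousOn (f := Function.uncurry K) (s := Icc a b ×ˢ Icc a b)
  exact ⟨M, fun t ht s hs => hM (t, s) ⟨ht, hs⟩⟩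

omit hK in
theorem abs_integral_kernel_mul_IccExtend_le {M : ℝ}
    (hM : ∀ t ∈ Icc a b, ∀ s ∈ Icc a b, |K t s| ≤ M) {x : C(Icc a b, ℝ)} {c : ℝ} {n : ℕ}
    (hx : ∀ u : Icc a b, |x u| ≤ c * ((u - a) ^ n / n !)) (u : Icc a b) :
    |∫ s in a..(u : ℝ), K u s * IccExtend hab x s| ≤ M * c * ((u - a) ^ (n + 1) / (n + 1)!) :=
  abs_integral_mul_le_pow_div_factorial n u.2.1
    (fun s hs => hM u u.2 s ⟨hs.1.le, hs.2.trans u.2.2⟩) fun s hs => by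
    have hs' : s ∈ Icc a b := ⟨hs.1.le, hs.2.trans u.2.2⟩
    simpa only [IccExtend_of_mem hab x hs'] using hx ⟨s, hs'⟩

noncomputable def volterraOperator : C(Icc a b, ℝ) →L[ℝ] C(Icc a b, ℝ) :=
  LinearMap.mkContinuousOfExistsBound
    { toFun := fun x => ⟨fun u => ∫ s in a..(u : ℝ), K u s * IccExtend hab x s,
        (continuous_integral_kernel_mul hK x.continuous.Icc_extend').comp continuous_subtype_val⟩
      map_add' := fun x y => by
        ext u
        refine (integral_congr fun s _ => mul_add _ _ _).trans (integral_add ?_ ?_) <;>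
          exact intervalIntegrable_kernel_mul hK (ContinuousMap.continuous _).Icc_extend' _ _ _
      map_smul' := fun c x => by
        ext u
        refine (integral_congr fun s _ => mul_left_comm _ c _).trans (integral_const_mul _ _) }
    (by
      obtain ⟨M, hM⟩ := exists_abs_kernel_le hK (a := a) (b := b)
      have hM0 : 0 ≤ M := (abs_nonneg _).trans (hM a ⟨le_rfl, hab⟩ a ⟨le_rfl, hab⟩)
      refine ⟨M * (b - a), fun x => (ContinuousMap.norm_le _ (by positivity)).2 fun u => ?_⟩
      have hx : ∀ u : Icc a b, |x u| ≤ ‖x‖ * ((u - a) ^ 0 / 0 !) := fun u => by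
        simpa using x.norm_coe_le_norm u
      refine (abs_integral_kernel_mul_IccExtend_le hab hM hx u).trans ?_
      simp only [zero_add, pow_one, Nat.factorial_one, Nat.cast_one, div_one]
      rw [mul_right_comm M (b - a)]
      exact mul_le_mul_of_nonneg_left (by linarith [u.2.2]) (mul_nonneg hM0 (norm_nonneg x)))

theorem volterraOperator_apply (x : C(Icc a b, ℝ)) (u : Icc a b) :
    volterraOperator hab hK x u = ∫ s in a..(u : ℝ), K u s * IccExtend hab x s :=
  rfl

theorem volterraOperator_apply_eq_const_mul {c : ℝ} {K' : ℝ → ℝ → ℝ}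
    (hKK' : ∀ t s, a ≤ s → s ≤ t → t ≤ b → K t s = c * K' t s) (x : C(Icc a b, ℝ))
    (u : Icc a b) :
    volterraOperator hab hK x u = c * ∫ s in a..(u : ℝ), K' u s * IccExtend hab x s := by
  rw [volterraOperator_apply, ← intervalIntegral.integral_const_mul]
  refine integral_congr fun s hs => ?_
  rw [uIcc_of_le u.2.1] at hs
  simp only [hKK' u s hs.1 hs.2 u.2.2, mul_assoc]

theorem abs_volterraOperator_pow_apply_le {M : ℝ}
    (hM : ∀ t ∈ Icc a b, ∀ s ∈ Icc a b, |K t s| ≤ M) (n : ℕ) (x : C(Icc a b, ℝ)) (u : Icc a b) :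
    |(volterraOperator hab hK ^ n) x u| ≤ M ^ n * ‖x‖ * ((u - a) ^ n / n !) := by
  induction n generalizing u with
  | zero => simpa using x.norm_coe_le_norm u
  | succ n ih =>
    rw [pow_succ', mul_apply_eq_comp, volterraOperator_apply, pow_succ, mul_comm _ M,
      mul_assoc M]
    exact abs_integral_kernel_mul_IccExtend_le hab hM ih u

theorem norm_volterraOperator_pow_le {M : ℝ} (hM : ∀ t ∈ Icc a b, ∀ s ∈ Icc a b, |K t s| ≤ M)
    (n : ℕ) : ‖volterraOperator hab hK ^ n‖ ≤ (M * (b - a)) ^ n / n ! := by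
  have hM0 : 0 ≤ M := (abs_nonneg _).trans (hM a ⟨le_rfl, hab⟩ a ⟨le_rfl, hab⟩)
  refine ContinuousLinearMap.opNorm_le_bound _ (by positivity) fun x =>
    (ContinuousMap.norm_le _ (by positivity)).2 fun u => ?_
  refine (abs_volterraOperator_pow_apply_le hab hK hM n x u).trans ?_
  rw [mul_pow, mul_div_assoc, mul_right_comm]
  gcongr
  · exact sub_nonneg.2 u.2.1
  · exact u.2.2

theorem summable_pow_volterraOperator : Summable fun n => volterraOperator hab hK ^ n := by
  obtain ⟨M, hM⟩ := exists_abs_kernel_le hK (a := a) (b := b)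
  exact .of_norm_bounded (E := C(Icc a b, ℝ) →L[ℝ] C(Icc a b, ℝ))
    (Real.summable_pow_div_factorial (M * (b - a))) (norm_volterraOperator_pow_le hab hK hM)

theorem volterraOperator_pow_succ_apply (n : ℕ) (x : C(Icc a b, ℝ)) (u : Icc a b) :
    (volterraOperator hab hK ^ (n + 1)) x u =
      ∫ s in a..(u : ℝ), iteratedKernel K n u s * IccExtend hab x s := by
  induction n generalizing u with
  | zero => rw [zero_add, pow_one, volterraOperator_apply, iteratedKernel_zero]
  | succ n ih =>
    have hx := x.continuous.Icc_extend' (h := hab)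
    have hH : Continuous (Function.uncurry fun s z =>
        K u s * (iteratedKernel K n s z * IccExtend hab x z)) :=
      (hK.comp (continuous_const.prodMk continuous_fst)).mul
        ((continuous_iteratedKernel hK n).mul (hx.comp continuous_snd))
    calc (volterraOperator hab hK ^ (n + 1 + 1)) x u
        = ∫ s in a..(u : ℝ), ∫ z in a..s, K u s * (iteratedKernel K n s z * IccExtend hab x z) := by
          rw [pow_succ', mul_apply_eq_comp, volterraOperator_apply]
          refine integral_congr fun s hs => ?_
          rw [uIcc_of_le u.2.1] at hs
          have hs' : s ∈ Icc a b := ⟨hs.1, hs.2.trans u.2.2⟩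
          rw [IccExtend_of_mem hab _ hs', ih ⟨s, hs'⟩, intervalIntegral.integral_const_mul]
      _ = ∫ z in a..(u : ℝ), ∫ s in z..u, K u s * (iteratedKernel K n s z * IccExtend hab x z) :=
          integral_integral_swap_triangle u.2.1 hH
      _ = ∫ z in a..(u : ℝ), iteratedKernel K (n + 1) u z * IccExtend hab x z := by
          refine integral_congr fun z _ => ?_
          simp only [iteratedKernel_succ, ← intervalIntegral.integral_mul_const, mul_assoc]

theorem tsum_pow_volterraOperator_apply (x : C(Icc a b, ℝ)) (u : Icc a b) :
    (∑' n, volterraOperator hab hK ^ n) x u =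
      x u + ∫ s in a..(u : ℝ), (∑' n, iteratedKernel K n u s) * IccExtend hab x s := by
  have hsum : HasSum (fun n => (volterraOperator hab hK ^ n) x u)
      ((∑' n, volterraOperator hab hK ^ n) x u) :=
    ((summable_pow_volterraOperator hab hK).hasSum.mapL
      (ContinuousLinearMap.apply ℝ _ x)).mapL (ContinuousMap.evalCLM ℝ u)
  refine hsum.unique (HasSum.zero_add ?_)
  simp only [volterraOperator_pow_succ_apply]
  obtain ⟨M, hM⟩ := exists_abs_kernel_le hK (a := a) (b := b)
  have hbound : ∀ n, ∀ s ∈ Ioc a (u : ℝ),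
      |iteratedKernel K n u s| ≤ M * ((M * (b - a)) ^ n / n !) :=
    fun n s hs => abs_iteratedKernel_le_uniform hM n hs.1.le hs.2 u.2.2
  have hsummable : Summable fun n => M * ((M * (b - a)) ^ n / n !) :=
    (Real.summable_pow_div_factorial _).mul_left M
  have hx := x.continuous.Icc_extend' (h := hab)
  refine intervalIntegral.hasSum_integral_of_dominated_convergence
    (fun n _ => M * ((M * (b - a)) ^ n / n !) * ‖x‖) (fun n => ?_) (fun n => ?_)
    (ae_of_all _ fun _ _ => hsummable.mul_right _) intervalIntegrable_const
    (ae_of_all _ fun s hs => ?_)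
  · exact (((continuous_iteratedKernel hK n).comp (Continuous.prodMk_right _)).mul
      hx).aestronglyMeasurable
  · refine ae_of_all _ fun s hs => ?_
    rw [uIoc_of_le u.2.1] at hs
    rw [Real.norm_eq_abs, abs_mul]
    exact mul_le_mul (hbound n s hs) (x.norm_coe_le_norm _) (abs_nonneg _)
      ((abs_nonneg _).trans (hbound n s hs))
  · rw [uIoc_of_le u.2.1] at hs
    exact (Summable.of_norm_bounded (E := ℝ) hsummable fun n =>
      (Real.norm_eq_abs _).trans_le (hbound n s hs)).hasSum.mul_right _

end Volterra

theorem existsUnique_add_sum_smul_eq {𝕜 V W ι : Type*} [Field 𝕜] [AddCommGroup V] [Module 𝕜 V]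
    [AddCommGroup W] [Module 𝕜 W] [Fintype ι] [DecidableEq ι] (E : V ≃ₗ[𝕜] W)
    (ev : V →ₗ[𝕜] ι → 𝕜) (g : ι → W) (f : W)
    (hdet : (1 + Matrix.of fun i j => ev (E.symm (g j)) i).det ≠ 0) :
    ∃! x, E x + ∑ j, ev x j • g j = f := by
  set A := 1 + Matrix.of fun i j => ev (E.symm (g j)) i
  set d := ev (E.symm f)
  set sol : (ι → 𝕜) → V := fun c => E.symm f - ∑ j, c j • E.symm (g j)
  have hsol : ∀ x, E x + ∑ j, ev x j • g j = f ↔ x = sol (ev x) := fun x => by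
    rw [eq_sub_iff_add_eq, ← E.symm.injective.eq_iff]
    simp only [map_add, map_sum, map_smul, LinearEquiv.symm_apply_apply]
  have hfix : ∀ c, ev (sol c) = c ↔ A *ᵥ c = d := fun c => by
    have : ev (sol c) = d - (A *ᵥ c - c) := by
      ext i
      simp [sol, A, d, add_mulVec, mulVec, dotProduct, mul_comm]
    rw [this]
    constructor <;> intro h <;> linear_combination -h
  have hA : IsUnit A := (isUnit_iff_isUnit_det A).2 hdet.isUnit
  obtain ⟨c, hc, hc_unique⟩ := Function.Bijective.existsUnique
    ⟨mulVec_injective_iff_isUnit.2 hA, mulVec_surjective_iff_isUnit.2 hA⟩ d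
  refine ⟨sol c, (hsol _).2 ?_, fun y hy => ?_⟩
  · rw [(hfix c).2 hc]
  · have hy' := (hsol y).1 hy
    rw [hy', hc_unique (ev y) ((hfix _).1 (congrArg ev hy').symm)]

theorem isClosed_triangle (a b : ℝ) : IsClosed {q : ℝ × ℝ | a ≤ q.2 ∧ q.2 ≤ q.1 ∧ q.1 ≤ b} :=
  (isClosed_le continuous_const continuous_snd).inter <|
    (isClosed_le continuous_snd continuous_fst).inter (isClosed_le continuous_fst continuous_const)

theorem iteratedKernel_const_mul (c : ℝ) (K : ℝ → ℝ → ℝ) (n : ℕ) (t s : ℝ) :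
    iteratedKernel (fun t s => c * K t s) n t s = c ^ (n + 1) * iteratedKernel K n t s := by
  induction n generalizing t with
  | zero => simp [iteratedKernel_zero]
  | succ n ih =>
    simp only [iteratedKernel_succ, ih, ← intervalIntegral.integral_const_mul]
    exact integral_congr fun z _ => by ring

theorem iteratedKernel_eq_of_rec {a b : ℝ} {K K' : ℝ → ℝ → ℝ} {Kn : ℕ → ℝ → ℝ → ℝ}
    (hK' : ∀ t s, a ≤ s → s ≤ t → t ≤ b → K' t s = K t s) (hKn1 : ∀ t s, Kn 1 t s = K t s)
    (hKnrec : ∀ n, 2 ≤ n → ∀ t s, Kn n t s = ∫ z in s..t, K t z * Kn (n - 1) z s)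
    (n : ℕ) {t s : ℝ} (has : a ≤ s) (hst : s ≤ t) (htb : t ≤ b) :
    Kn (n + 1) t s = iteratedKernel K' n t s := by
  induction n generalizing t with
  | zero => rw [hKn1, iteratedKernel_zero, hK' t s has hst htb]
  | succ n ih =>
    rw [hKnrec (n + 2) (by omega), iteratedKernel_succ]
    refine integral_congr fun z hz => ?_
    rw [uIcc_of_le hst] at hz
    rw [show n + 2 - 1 = n + 1 by omega, ih hz.1 (hz.2.trans htb),
      hK' t z (has.trans hz.1) hz.2 htb]

theorem lvie_unique_solution_of_det_ne_zero_general
    (t₀ T : ℝ) (ht : t₀ < T) (m : ℕ)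
    (p : Fin (m - 1) → ℝ)
    (hp : ∀ j, t₀ < p j ∧ p j < T)
    (f : ℝ → ℝ) (hf : ContinuousOn f (Set.Icc t₀ T))
    (a : Fin (m - 1) → ℝ → ℝ) (ha : ∀ j, ContinuousOn (a j) (Set.Icc t₀ T))
    (K : ℝ → ℝ → ℝ)
    (hK : ContinuousOn (fun q : ℝ × ℝ => K q.1 q.2)
      {q : ℝ × ℝ | t₀ ≤ q.2 ∧ q.2 ≤ q.1 ∧ q.1 ≤ T})
    (lam : ℝ)
    (Kn : ℕ → ℝ → ℝ → ℝ)
    (hKn1 : ∀ t s, Kn 1 t s = K t s)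
    (hKnrec : ∀ n, 2 ≤ n → ∀ t s, Kn n t s = ∫ z in s..t, K t z * Kn (n - 1) z s)
    (R : ℝ → ℝ → ℝ → ℝ)
    (hR : ∀ t s lam', R t s lam' = ∑' n : ℕ, lam' ^ (n + 1) * Kn (n + 1) t s)
    (b : Fin (m - 1) → ℝ → ℝ → ℝ)
    (hb : ∀ j t lam', b j t lam' = a j t + ∫ s in t₀..t, R t s lam' * a j s)
    (A : Matrix (Fin (m - 1)) (Fin (m - 1)) ℝ)
    (hA : ∀ i j, A i j = (if i = j then 1 else 0) + b j (p i) lam)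
    (hdet : A.det ≠ 0) :
    ∃! x : C(Set.Icc t₀ T, ℝ),
      ∀ t ∈ Set.Icc t₀ T,
        Set.IccExtend ht.le x t + ∑ j, a j t * Set.IccExtend ht.le x (p j) =
          lam * (∫ s in t₀..t, K t s * Set.IccExtend ht.le x s) + f t := by
  obtain ⟨K₀, hK₀, hK₀K⟩ := hK.exists_continuous_eqOn (isClosed_triangle t₀ T)
  have hK' : ∀ t s, t₀ ≤ s → s ≤ t → t ≤ T → Function.curry K₀ t s = K t s :=
    fun t s has hst htb => hK₀K ⟨has, hst, htb⟩
  set L : ℝ → ℝ → ℝ := fun t s => lam * Function.curry K₀ t s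
  have hL : Continuous (Function.uncurry L) := continuous_const.mul hK₀
  set E := (ContinuousLinearEquiv.oneSubOfSummable (volterraOperator ht.le hL)
    (summable_pow_volterraOperator ht.le hL)).toLinearEquiv
  have hpIcc : ∀ j, p j ∈ Icc t₀ T := fun j => ⟨(hp j).1.le, (hp j).2.le⟩
  set ev : C(Icc t₀ T, ℝ) →ₗ[ℝ] Fin (m - 1) → ℝ :=
    LinearMap.pi fun j => (ContinuousMap.evalCLM ℝ ⟨p j, hpIcc j⟩ : C(Icc t₀ T, ℝ) →L[ℝ] ℝ)
  set aC : Fin (m - 1) → C(Icc t₀ T, ℝ) :=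
    fun j => ⟨(Icc t₀ T).domRestrict (a j), (ha j).domRestrict⟩
  have hmatrix : A = 1 + Matrix.of fun i j => ev (E.symm (aC j)) i := by
    ext i j
    have hresolvent : ∀ s ∈ uIcc t₀ (p i), R (p i) s lam * a j s =
        (∑' n, iteratedKernel L n (p i) s) * IccExtend ht.le (aC j) s := fun s hs => by
      rw [uIcc_of_le (hpIcc i).1] at hs
      rw [IccExtend_of_mem ht.le _ ⟨hs.1, hs.2.trans (hpIcc i).2⟩, hR]
      congr 1
      refine tsum_congr fun n => ?_
      rw [iteratedKernel_const_mul,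
        iteratedKernel_eq_of_rec hK' hKn1 hKnrec n hs.1 hs.2 (hpIcc i).2]
    rw [hA, hb, Matrix.add_apply, Matrix.one_apply, Matrix.of_apply, integral_congr hresolvent]
    exact congrArg _ (tsum_pow_volterraOperator_apply ht.le hL (aC j) ⟨p i, hpIcc i⟩).symm
  refine (existsUnique_congr fun x => ?_).2 (existsUnique_add_sum_smul_eq E ev aC
    ⟨(Icc t₀ T).domRestrict f, hf.domRestrict⟩ (hmatrix ▸ hdet))
  rw [ContinuousMap.ext_iff, Subtype.forall]
  refine forall₂_congr fun t ht' => ?_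
  simp only [E, ContinuousLinearEquiv.coe_toLinearEquiv,
    ContinuousLinearEquiv.oneSubOfSummable_apply, ContinuousMap.add_apply,
    ContinuousMap.sub_apply, ContinuousMap.coe_sum, Finset.sum_apply, ContinuousMap.smul_apply,
    smul_eq_mul, IccExtend_of_mem ht.le x ht', IccExtend_of_mem ht.le x (hpIcc _),
    volterraOperator_apply_eq_const_mul ht.le hL fun t s has hst htb => congrArg (lam * ·)
      (hK' t s has hst htb), mul_comm (a _ t)]
  change _ ↔ _ + ∑ j, x ⟨p j, hpIcc j⟩ * a j t = f t
  constructor <;> intro h <;> linarith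

/-- Theorem 1: if det A(λ) ≠ 0 then the loaded Volterra integral equation has
exactly one continuous solution on [t₀,T]. -/
theorem lvie_unique_solution_of_det_ne_zero
    (t₀ T : ℝ) (ht : t₀ < T) (m : ℕ) (hm : 2 ≤ m)
    (p : Fin (m - 1) → ℝ) (hpmono : StrictMono p)
    (hp : ∀ j, t₀ < p j ∧ p j < T)
    (f : ℝ → ℝ) (hf : ContinuousOn f (Set.Icc t₀ T))
    (a : Fin (m - 1) → ℝ → ℝ) (ha : ∀ j, ContinuousOn (a j) (Set.Icc t₀ T))
    (K : ℝ → ℝ → ℝ)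
    (hK : ContinuousOn (fun q : ℝ × ℝ => K q.1 q.2)
      {q : ℝ × ℝ | t₀ ≤ q.2 ∧ q.2 ≤ q.1 ∧ q.1 ≤ T})
    (lam : ℝ)
    (Kn : ℕ → ℝ → ℝ → ℝ)
    (hKn1 : ∀ t s, Kn 1 t s = K t s)
    (hKnrec : ∀ n, 2 ≤ n → ∀ t s, Kn n t s = ∫ z in s..t, K t z * Kn (n - 1) z s)
    (R : ℝ → ℝ → ℝ → ℝ)
    (hR : ∀ t s lam', R t s lam' = ∑' n : ℕ, lam' ^ (n + 1) * Kn (n + 1) t s)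
    (b : Fin (m - 1) → ℝ → ℝ → ℝ)
    (hb : ∀ j t lam', b j t lam' = a j t + ∫ s in t₀..t, R t s lam' * a j s)
    (A : Matrix (Fin (m - 1)) (Fin (m - 1)) ℝ)
    (hA : ∀ i j, A i j = (if i = j then 1 else 0) + b j (p i) lam)
    (hdet : A.det ≠ 0) :
    ∃! x : C(Set.Icc t₀ T, ℝ),
      ∀ t ∈ Set.Icc t₀ T,
        Set.IccExtend ht.le x t + ∑ j, a j t * Set.IccExtend ht.le x (p j) =
          lam * (∫ s in t₀..t, K t s * Set.IccExtend ht.le x s) + f t :=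
  lvie_unique_solution_of_det_ne_zero_general t₀ T ht m p hp f hf a ha K hK lam Kn hKn1 hKnrec R hR
    b hb A hA hdet
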